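/- arXiv:2502.13743 — 3 statements merged into one kernel-verified Lean document; each statement's English description precedes it below -/
import Mathlib

section
/- Characterization of ⟨Δ⟩ by maximizers (auxiliary lemma used in the proof of Theorem 2): For every finite set Δ of L-sentences and every index i, one has i ∈ ⟨Δ⟩ if and only if p i > 0 and |Δ|ᵢ is maximal among possible indices, i.e., |Δ|ᵢ ≥ |Δ|_j for every possible index j. -/
open FirstOrder
open scoped Classical

variable {L : FirstOrder.Language} {ι : Type*}

/-- `Sat M α i` means the structure `M i` satisfies the sentence `α` (i.e. `M i ⊨ α`). -/
def Sat (M : ι → Type*) [∀ i, L.Structure (M i)] (α : L.Sentence) (i : ι) : Prop :=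
  FirstOrder.Language.Sentence.Realize (M := M i) α

/-- The indicator `⟦α⟧ᵢ`: `1` if `M i ⊨ α`, `0` otherwise (a natural number). -/
noncomputable def ind (M : ι → Type*) [∀ i, L.Structure (M i)]
    (α : L.Sentence) (i : ι) : ℕ :=
  if Sat M α i then 1 else 0

/-- `M i ⊨ S`: the structure `M i` satisfies every sentence in the finite set `S`. -/
def SatAll (M : ι → Type*) [∀ i, L.Structure (M i)]
    (S : Finset L.Sentence) (i : ι) : Prop :=
  ∀ β ∈ S, Sat M β i

/-- `|Δ|ᵢ`: the number of sentences of `Δ` that are true in `M i`. -/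
noncomputable def nSat (M : ι → Type*) [∀ i, L.Structure (M i)]
    (Δ : Finset L.Sentence) (i : ι) : ℕ :=
  (Δ.filter (fun β => Sat M β i)).card

/-- A finite set `S` of sentences is possible if some possible index satisfies all of it. -/
def PossibleSet (M : ι → Type*) [∀ i, L.Structure (M i)] (p : ι → ℝ)
    (S : Finset L.Sentence) : Prop :=
  ∃ i, 0 < p i ∧ SatAll M S i

/-- `MPS Δ`: the cardinality-maximal possible subsets of `Δ`. -/
def MPS (M : ι → Type*) [∀ i, L.Structure (M i)] (p : ι → ℝ)
    (Δ : Finset L.Sentence) : Set (Finset L.Sentence) :=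
  {S | S ⊆ Δ ∧ PossibleSet M p S ∧
    ∀ T ⊆ Δ, PossibleSet M p T → T.card ≤ S.card}

/-- `⟨Δ⟩`: the possible indices satisfying some cardinality-maximal possible subset of `Δ`. -/
def angleSet (M : ι → Type*) [∀ i, L.Structure (M i)] (p : ι → ℝ)
    (Δ : Finset L.Sentence) : Set ι :=
  {i | 0 < p i ∧ ∃ S ∈ MPS M p Δ, SatAll M S i}

/-- `L(α|Δ) = (∑_{i∈⟨Δ⟩} ⟦α⟧ᵢ·p i) / (∑_{i∈⟨Δ⟩} p i)`. -/
noncomputable def Lcond (M : ι → Type*) [∀ i, L.Structure (M i)] (p : ι → ℝ)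
    (α : L.Sentence) (Δ : Finset L.Sentence) : ℝ :=
  (∑ᶠ i ∈ angleSet M p Δ, (ind M α i : ℝ) * p i) / (∑ᶠ i ∈ angleSet M p Δ, p i)

/-- `P_μ(α|Δ)`, with natural-number exponents (so `0 ^ 0 = 1`). -/
noncomputable def Pcond (M : ι → Type*) [∀ i, L.Structure (M i)] (p : ι → ℝ)
    (μ : ℝ) (α : L.Sentence) (Δ : Finset L.Sentence) : ℝ :=
  (∑ᶠ i, μ ^ (ind M α i) * (1 - μ) ^ (1 - ind M α i) *
      (μ ^ (nSat M Δ i) * (1 - μ) ^ (Δ.card - nSat M Δ i)) * p i) /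
  (∑ᶠ i, μ ^ (nSat M Δ i) * (1 - μ) ^ (Δ.card - nSat M Δ i) * p i)

/-- A finite set `S` of sentences is consistent if some index satisfies all of it. -/
def ConsistentSet (M : ι → Type*) [∀ i, L.Structure (M i)]
    (S : Finset L.Sentence) : Prop :=
  ∃ i, SatAll M S i

/-- `MCS Δ`: the cardinality-maximal consistent subsets of `Δ`. -/
def MCS (M : ι → Type*) [∀ i, L.Structure (M i)]
    (Δ : Finset L.Sentence) : Set (Finset L.Sentence) :=
  {S | S ⊆ Δ ∧ ConsistentSet M S ∧
    ∀ T ⊆ Δ, ConsistentSet M T → T.card ≤ S.card}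

/-- `⟪Δ⟫`: the indices satisfying some cardinality-maximal consistent subset of `Δ`. -/
def dangleSet (M : ι → Type*) [∀ i, L.Structure (M i)]
    (Δ : Finset L.Sentence) : Set ι :=
  {i | ∃ S ∈ MCS M Δ, SatAll M S i}

theorem card_le_nSat {M : ι → Type*} [∀ i, L.Structure (M i)] {S Δ : Finset L.Sentence}
    {i : ι} (hSΔ : S ⊆ Δ) (hS : SatAll M S i) : S.card ≤ nSat M Δ i :=
  Finset.card_le_card fun β hβ => Finset.mem_filter.2 ⟨hSΔ hβ, hS β hβ⟩

theorem satAll_filter_sat (M : ι → Type*) [∀ i, L.Structure (M i)] (Δ : Finset L.Sentence)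
    (i : ι) : SatAll M (Δ.filter fun β => Sat M β i) i :=
  fun _ hβ => (Finset.mem_filter.1 hβ).2

theorem nSat_le_card_of_mem_MPS {M : ι → Type*} [∀ i, L.Structure (M i)] {p : ι → ℝ}
    {Δ S : Finset L.Sentence} (hS : S ∈ MPS M p Δ) {j : ι} (hpj : 0 < p j) :
    nSat M Δ j ≤ S.card :=
  hS.2.2 _ (Finset.filter_subset _ _) ⟨j, hpj, satAll_filter_sat M Δ j⟩

theorem filter_sat_mem_MPS {M : ι → Type*} [∀ i, L.Structure (M i)] {p : ι → ℝ}
    {Δ : Finset L.Sentence} {i : ι} (hpi : 0 < p i)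
    (hmax : ∀ j, 0 < p j → nSat M Δ j ≤ nSat M Δ i) :
    (Δ.filter fun β => Sat M β i) ∈ MPS M p Δ := by
  refine ⟨Finset.filter_subset _ _, ⟨i, hpi, satAll_filter_sat M Δ i⟩, ?_⟩
  rintro T hTΔ ⟨j, hpj, hTj⟩
  exact (card_le_nSat hTΔ hTj).trans (hmax j hpj)

theorem stmt7_general
    (M : ι → Type*) [∀ i, L.Structure (M i)]
    (p : ι → ℝ)
    (Δ : Finset L.Sentence) (i : ι) :
    i ∈ angleSet M p Δ ↔
      0 < p i ∧ ∀ j, 0 < p j → nSat M Δ j ≤ nSat M Δ i := by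
  constructor
  · rintro ⟨hpi, S, hS, hSi⟩
    exact ⟨hpi, fun j hpj => (nSat_le_card_of_mem_MPS hS hpj).trans (card_le_nSat hS.1 hSi)⟩
  · rintro ⟨hpi, hmax⟩
    exact ⟨hpi, _, filter_sat_mem_MPS hpi hmax, satAll_filter_sat M Δ i⟩

/-- **Characterization of `⟨Δ⟩` by maximizers**: `i ∈ ⟨Δ⟩` iff `p i > 0` and `|Δ|ᵢ` is
maximal among possible indices. -/
theorem stmt7 [Countable ι]
    (M : ι → Type*) [∀ i, L.Structure (M i)] [∀ i, Nonempty (M i)]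
    (p : ι → ℝ) (hp0 : ∀ i, 0 ≤ p i) (hpfin : (Function.support p).Finite)
    (hp1 : ∑ᶠ i, p i = 1)
    (Δ : Finset L.Sentence) (i : ι) :
    i ∈ angleSet M p Δ ↔
      0 < p i ∧ ∀ j, 0 < p j → nSat M Δ j ≤ nSat M Δ i :=
  stmt7_general M p Δ i
end

section
/- Corollary (certain reasoning at μ → 1 via cardinality-maximal consistent subsets): Let α be an L-sentence and Δ a finite set of L-sentences such that ⟨Δ⟩ = ⟪Δ⟫ (as sets of indices). Then L(α|Δ) = 1 if and only if S ⊨ α for every cardinality-maximal consistent subset S ∈ MCS(Δ). -/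
open FirstOrder
open scoped Classical

variable {L : FirstOrder.Language} {ι : Type*}

/-! Every index of `⟨Δ⟩` has positive weight and `⟦α⟧ᵢ ≤ 1`, so the weighted average `L(α|Δ)`
equals `1` exactly when `α` holds throughout `⟨Δ⟩`, provided `⟨Δ⟩` is finite (it lies in the
support of `p`) and nonempty (it equals `⟪Δ⟫`, and `MCS(Δ)` is nonempty). Rewriting `⟨Δ⟩` as
`⟪Δ⟫` gives the statement about `MCS(Δ)`. -/

theorem finsum_mem_mul_div_finsum_mem_eq_one_iff {s : Set ι} {f w : ι → ℝ}
    (hs : s.Finite) (hne : s.Nonempty) (hw : ∀ i ∈ s, 0 < w i) (hf : ∀ i ∈ s, f i ≤ 1) :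
    (∑ᶠ i ∈ s, f i * w i) / (∑ᶠ i ∈ s, w i) = 1 ↔ ∀ i ∈ s, f i = 1 := by
  have hpos : 0 < ∑ i ∈ hs.toFinset, w i :=
    Finset.sum_pos (fun i hi => hw i (hs.mem_toFinset.mp hi)) (hs.toFinset_nonempty.mpr hne)
  have hle : ∀ i ∈ hs.toFinset, f i * w i ≤ w i := fun i hi =>
    mul_le_of_le_one_left (hw i (hs.mem_toFinset.mp hi)).le (hf i (hs.mem_toFinset.mp hi))
  rw [finsum_mem_eq_finite_toFinset_sum _ hs, finsum_mem_eq_finite_toFinset_sum _ hs,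
    div_eq_one_iff_eq hpos.ne', Finset.sum_eq_sum_iff_of_le hle]
  simp only [Set.Finite.mem_toFinset]
  exact forall₂_congr fun i hi => mul_eq_right₀ (hw i hi).ne'

section Models

variable (M : ι → Type*) [∀ i, L.Structure (M i)]

theorem ind_le_one (α : L.Sentence) (i : ι) : (ind M α i : ℝ) ≤ 1 := by
  unfold ind; split_ifs <;> norm_num

theorem ind_eq_one_iff (α : L.Sentence) (i : ι) : (ind M α i : ℝ) = 1 ↔ Sat M α i := by
  unfold ind; split_ifs with h <;> simp [h]

theorem angleSet_finite {p : ι → ℝ} (hp : (Function.support p).Finite) (Δ : Finset L.Sentence) :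
    (angleSet M p Δ).Finite :=
  hp.subset fun _ hi => hi.1.ne'

theorem Lcond_eq_one_iff {p : ι → ℝ} {Δ : Finset L.Sentence} (α : L.Sentence)
    (hfin : (angleSet M p Δ).Finite) (hne : (angleSet M p Δ).Nonempty) :
    Lcond M p α Δ = 1 ↔ ∀ i ∈ angleSet M p Δ, Sat M α i := by
  rw [Lcond, finsum_mem_mul_div_finsum_mem_eq_one_iff hfin hne (fun i hi => hi.1)
    (fun i _ => ind_le_one M α i)]
  exact forall₂_congr fun i _ => ind_eq_one_iff M α i

theorem MCS_nonempty [Nonempty ι] (Δ : Finset L.Sentence) : (MCS M Δ).Nonempty := by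
  have hempty : ConsistentSet M (∅ : Finset L.Sentence) :=
    ⟨Classical.arbitrary ι, fun _ h => absurd h (Finset.notMem_empty _)⟩
  obtain ⟨S, hS, hmax⟩ := (Δ.powerset.filter (ConsistentSet M)).exists_max_image Finset.card
    ⟨∅, Finset.mem_filter.mpr ⟨Finset.empty_mem_powerset Δ, hempty⟩⟩
  rw [Finset.mem_filter, Finset.mem_powerset] at hS
  exact ⟨S, hS.1, hS.2, fun T hT hTcons =>
    hmax T (Finset.mem_filter.mpr ⟨Finset.mem_powerset.mpr hT, hTcons⟩)⟩

theorem dangleSet_nonempty [Nonempty ι] (Δ : Finset L.Sentence) : (dangleSet M Δ).Nonempty := by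
  obtain ⟨S, hS⟩ := MCS_nonempty M Δ
  obtain ⟨i, hi⟩ := hS.2.1
  exact ⟨i, S, hS, hi⟩

end Models

theorem stmt9_general
    (M : ι → Type*) [∀ i, L.Structure (M i)]
    (p : ι → ℝ) (hpfin : (Function.support p).Finite)
    (hp1 : ∑ᶠ i, p i = 1)
    (α : L.Sentence) (Δ : Finset L.Sentence)
    (heq : angleSet M p Δ = dangleSet M Δ) :
    Lcond M p α Δ = 1 ↔
      ∀ S ∈ MCS M Δ, ∀ i, SatAll M S i → Sat M α i := by
  have : Nonempty ι :=
    not_isEmpty_iff.mp fun _ => zero_ne_one ((finsum_of_isEmpty p).symm.trans hp1)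
  rw [Lcond_eq_one_iff M α (angleSet_finite M hpfin Δ) (heq ▸ dangleSet_nonempty M Δ), heq]
  exact ⟨fun h S hS i hi => h i ⟨S, hS, hi⟩, fun h i ⟨S, hS, hi⟩ => h S hS i hi⟩

/-- **Corollary** (certain reasoning at `μ → 1` via cardinality-maximal consistent subsets):
if `⟨Δ⟩ = ⟪Δ⟫`, then `L(α|Δ) = 1` iff `S ⊨ α` for every `S ∈ MCS(Δ)`. -/
theorem stmt9 [Countable ι]
    (M : ι → Type*) [∀ i, L.Structure (M i)] [∀ i, Nonempty (M i)]
    (p : ι → ℝ) (hp0 : ∀ i, 0 ≤ p i) (hpfin : (Function.support p).Finite)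
    (hp1 : ∑ᶠ i, p i = 1)
    (α : L.Sentence) (Δ : Finset L.Sentence)
    (heq : angleSet M p Δ = dangleSet M Δ) :
    Lcond M p α Δ = 1 ↔
      ∀ S ∈ MCS M Δ, ∀ i, SatAll M S i → Sat M α i :=
  stmt9_general M p hpfin hp1 α Δ heq
end

section
/- Corollary (μ → 1 and μ = 1 agree on possible premises): Let α be an L-sentence and Δ a finite set of L-sentences such that there exists a possible index i with Mᵢ ⊨ Δ. Then L(α|Δ) = P₁(α|Δ). -/
/-!
When some possible index satisfies all of `Δ`, the only cardinality-maximal possible subset of `Δ`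
is `Δ` itself, so `⟨Δ⟩` consists of the possible models of `Δ`. At `μ = 1` the likelihood weight
`1 ^ |Δ|ᵢ · 0 ^ (|Δ| - |Δ|ᵢ)` is the indicator of `Mᵢ ⊨ Δ` and `1 ^ ⟦α⟧ᵢ · 0 ^ (1 - ⟦α⟧ᵢ) = ⟦α⟧ᵢ`,
so both sides are the `p`-weighted frequency of `α` among the models of `Δ`.
-/

open FirstOrder
open scoped Classical

variable {L : FirstOrder.Language} {ι : Type*}

section

variable (M : ι → Type*) [∀ i, L.Structure (M i)]

theorem MPS_eq_singleton {p : ι → ℝ} {Δ : Finset L.Sentence} (hΔ : PossibleSet M p Δ) :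
    MPS M p Δ = {Δ} := by
  ext S
  simp only [MPS, Set.mem_ofPred_eq, Set.mem_singleton_iff]
  constructor
  · rintro ⟨hSΔ, -, hmax⟩
    exact Finset.eq_of_subset_of_card_le hSΔ (hmax Δ subset_rfl hΔ)
  · rintro rfl
    exact ⟨subset_rfl, hΔ, fun T hT _ => Finset.card_le_card hT⟩

theorem mem_angleSet_iff {p : ι → ℝ} {Δ : Finset L.Sentence} (hΔ : PossibleSet M p Δ) (i : ι) :
    i ∈ angleSet M p Δ ↔ 0 < p i ∧ SatAll M Δ i := by
  simp [angleSet, MPS_eq_singleton M hΔ]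

theorem nSat_eq_card_iff (Δ : Finset L.Sentence) (i : ι) :
    nSat M Δ i = Δ.card ↔ SatAll M Δ i := by
  rw [nSat, Finset.card_filter_eq_iff]
  rfl

theorem zero_pow_card_sub_nSat (Δ : Finset L.Sentence) (i : ι) :
    (0 : ℝ) ^ (Δ.card - nSat M Δ i) = if SatAll M Δ i then 1 else 0 := by
  have hle : nSat M Δ i ≤ Δ.card := Finset.card_filter_le _ _
  split_ifs with h
  · rw [(nSat_eq_card_iff M Δ i).mpr h, Nat.sub_self, pow_zero]
  · have hlt : nSat M Δ i < Δ.card := hle.lt_of_ne (mt (nSat_eq_card_iff M Δ i).mp h)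
    exact zero_pow (Nat.sub_ne_zero_of_lt hlt)

theorem zero_pow_one_sub_ind (α : L.Sentence) (i : ι) :
    (0 : ℝ) ^ (1 - ind M α i) = ind M α i := by
  by_cases h : Sat M α i <;> simp [ind, h]

theorem Pcond_one (p : ι → ℝ) (α : L.Sentence) (Δ : Finset L.Sentence) :
    Pcond M p 1 α Δ =
      (∑ᶠ i ∈ {i | SatAll M Δ i}, (ind M α i : ℝ) * p i) / ∑ᶠ i ∈ {i | SatAll M Δ i}, p i := by
  rw [Pcond, finsum_mem_def, finsum_mem_def]
  simp only [sub_self, one_pow, one_mul, zero_pow_one_sub_ind, zero_pow_card_sub_nSat]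
  congr 1 <;> congr 1 <;> ext i <;> by_cases h : SatAll M Δ i <;> simp [h]

theorem Lcond_eq_of_possibleSet {p : ι → ℝ} (hp0 : ∀ i, 0 ≤ p i) (α : L.Sentence)
    {Δ : Finset L.Sentence} (hΔ : PossibleSet M p Δ) :
    Lcond M p α Δ =
      (∑ᶠ i ∈ {i | SatAll M Δ i}, (ind M α i : ℝ) * p i) / ∑ᶠ i ∈ {i | SatAll M Δ i}, p i := by
  have hpos : ∀ i, p i ≠ 0 → (i ∈ angleSet M p Δ ↔ SatAll M Δ i) := fun i hi => by
    rw [mem_angleSet_iff M hΔ, and_iff_right ((hp0 i).lt_of_ne' hi)]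
  rw [Lcond]
  congr 1 <;> apply finsum_mem_inter_support_eq'
  · exact fun i hi => hpos i (right_ne_zero_of_mul hi)
  · exact hpos

end

theorem stmt12_general
    (M : ι → Type*) [∀ i, L.Structure (M i)]
    (p : ι → ℝ) (hp0 : ∀ i, 0 ≤ p i)
    (α : L.Sentence) (Δ : Finset L.Sentence)
    (hposs : ∃ i, 0 < p i ∧ SatAll M Δ i) :
    Lcond M p α Δ = Pcond M p 1 α Δ := by
  rw [Lcond_eq_of_possibleSet M hp0 α hposs, Pcond_one]

/-- **Corollary** (`μ → 1` and `μ = 1` agree on possible premises): if some possible index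
satisfies `Δ`, then `L(α|Δ) = P₁(α|Δ)`. -/
theorem stmt12 [Countable ι]
    (M : ι → Type*) [∀ i, L.Structure (M i)] [∀ i, Nonempty (M i)]
    (p : ι → ℝ) (hp0 : ∀ i, 0 ≤ p i) (hpfin : (Function.support p).Finite)
    (hp1 : ∑ᶠ i, p i = 1)
    (α : L.Sentence) (Δ : Finset L.Sentence)
    (hposs : ∃ i, 0 < p i ∧ SatAll M Δ i) :
    Lcond M p α Δ = Pcond M p 1 α Δ :=
  stmt12_general M p hp0 α Δ hposs
end
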